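/- Let w ≥ 2, l ≤ 0, u ≥ 1 with 2^{w-1} ≤ u − l + 1 < 2^w, and let h(n) denote the minimal Hamming weight over all representations n = Σ_{i=0}^{L} ε_i 2^i with digits ε_i ∈ {a ∈ ℤ : l ≤ a ≤ u}. Then h satisfies: h(0) = 0; h(2n) = h(n) for n ≠ 0; and for odd n, h(n) ≤ 1 + min over digits a ∈ D_{l,u} with a ≡ n (mod 2^{w-1}) of h((n − a)/2^{w-1}). -/

import Mathlib

def digitValue (l : List ℤ) : ℤ :=
  ∑ i ∈ Finset.range l.length, l.getD i 0 * 2 ^ i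

def hammingWeight (l : List ℤ) : ℕ := (l.filter (· ≠ 0)).length

/-!
The key fact is a carry lemma: adding a digit `e` to a `D_{ℓ,u}`-representation `t` yields a
representation of `e + value t` of weight at most that of `e :: t`. Two nonzero digits `e, d`
at the same position are replaced by `(e + d) % 2` there and the carry `(e + d) / 2`, which lies
in `[ℓ, u]` again, and the carry is pushed upwards. This gives `h n ≤ h (2n)` (halve the even
last digit of `2n` and add it to the rest) and `h (a + m) ≤ 1 + h m`; the remaining inequalities
only prepend zero digits.
-/

@[simp]
lemma digitValue_nil : digitValue [] = 0 := by simp [digitValue]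

@[simp]
lemma digitValue_cons (d : ℤ) (t : List ℤ) :
    digitValue (d :: t) = d + 2 * digitValue t := by
  simp only [digitValue, List.length_cons, Finset.sum_range_succ', List.getD_cons_succ,
    List.getD_cons_zero, pow_succ, pow_zero, mul_one, Finset.mul_sum]
  rw [add_comm]
  exact congrArg (d + ·) (Finset.sum_congr rfl fun _ _ => by ring)

@[simp]
lemma hammingWeight_nil : hammingWeight [] = 0 := rfl

@[simp]
lemma hammingWeight_cons (d : ℤ) (t : List ℤ) :
    hammingWeight (d :: t) = (if d = 0 then 0 else 1) + hammingWeight t := by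
  by_cases hd : d = 0 <;> simp [hammingWeight, hd, add_comm]

section Digits

variable {ℓ u : ℤ}

lemma exists_digit_add_two_mul_carry (hℓ : ℓ ≤ 0) (hu : 1 ≤ u) {e d : ℤ}
    (he : ℓ ≤ e ∧ e ≤ u) (hd : ℓ ≤ d ∧ d ≤ u) :
    ∃ r c : ℤ, (ℓ ≤ r ∧ r ≤ u) ∧ (ℓ ≤ c ∧ c ≤ u) ∧ r + 2 * c = e + d ∧
      hammingWeight [r, c] ≤ hammingWeight [e, d] := by
  obtain ⟨heℓ, heu⟩ := he
  obtain ⟨hdℓ, hdu⟩ := hd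
  by_cases he0 : e = 0
  · exact ⟨d, 0, ⟨hdℓ, hdu⟩, by omega, by omega, by simp [he0]⟩
  by_cases hd0 : d = 0
  · exact ⟨e, 0, ⟨heℓ, heu⟩, by omega, by omega, by simp [hd0]⟩
  refine ⟨(e + d) % 2, (e + d) / 2, by omega, by omega, by omega, ?_⟩
  simp only [hammingWeight_cons, hammingWeight_nil, he0, hd0, if_false]
  split_ifs <;> omega

lemma exists_digitValue_eq_digit_add (hℓ : ℓ ≤ 0) (hu : 1 ≤ u) {t : List ℤ}
    (ht : ∀ d ∈ t, ℓ ≤ d ∧ d ≤ u) {e : ℤ} (he : ℓ ≤ e ∧ e ≤ u) :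
    ∃ l : List ℤ, (∀ d ∈ l, ℓ ≤ d ∧ d ≤ u) ∧ digitValue l = e + digitValue t ∧
      hammingWeight l ≤ hammingWeight (e :: t) := by
  induction t generalizing e with
  | nil => exact ⟨[e], by simpa using he, by simp, le_rfl⟩
  | cons d t ih =>
    simp only [List.forall_mem_cons] at ht
    obtain ⟨r, c, hr, hc, hsum, hweight⟩ := exists_digit_add_two_mul_carry hℓ hu he ht.1
    obtain ⟨l, hl, hval, hwl⟩ := ih ht.2 hc
    refine ⟨r :: l, List.forall_mem_cons.2 ⟨hr, hl⟩, by simp only [digitValue_cons]; linarith, ?_⟩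
    simp only [hammingWeight_cons, hammingWeight_nil] at hweight hwl ⊢
    omega

lemma exists_digitValue_eq (hℓ : ℓ ≤ 0) (hu : 1 ≤ u) {n : ℤ} (hn : ℓ = 0 → 0 ≤ n) :
    ∃ l : List ℤ, (∀ d ∈ l, ℓ ≤ d ∧ d ≤ u) ∧ digitValue l = n := by
  induction n using Int.induction_on with
  | zero => exact ⟨[], by simp, rfl⟩
  | succ i ih =>
    obtain ⟨l, hl, hval⟩ := ih fun _ => by positivity
    obtain ⟨l', hl', hval', -⟩ := exists_digitValue_eq_digit_add hℓ hu hl (e := 1) ⟨by omega, hu⟩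
    exact ⟨l', hl', by rw [hval', hval, add_comm]⟩
  | pred i ih =>
    have hℓ1 : ℓ ≤ -1 := by omega
    obtain ⟨l, hl, hval⟩ := ih fun _ => by omega
    obtain ⟨l', hl', hval', -⟩ := exists_digitValue_eq_digit_add hℓ hu hl (e := -1) ⟨hℓ1, by omega⟩
    exact ⟨l', hl', by rw [hval', hval]; ring⟩

end Digits

section MinWeight

/-- The function `h`; at integers without a representation (`ℓ = 0`, `n < 0`) it is `sInf ∅ = 0`. -/
noncomputable def minWeight (ℓ u n : ℤ) : ℕ :=
  sInf {k : ℕ | ∃ l : List ℤ,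
    (∀ d ∈ l, ℓ ≤ d ∧ d ≤ u) ∧ digitValue l = n ∧ hammingWeight l = k}

variable {ℓ u : ℤ}

lemma minWeight_digitValue_le {l : List ℤ} (hl : ∀ d ∈ l, ℓ ≤ d ∧ d ≤ u) :
    minWeight ℓ u (digitValue l) ≤ hammingWeight l :=
  Nat.sInf_le ⟨l, hl, rfl, rfl⟩

lemma exists_hammingWeight_eq_minWeight (hℓ : ℓ ≤ 0) (hu : 1 ≤ u) {n : ℤ}
    (hn : ℓ = 0 → 0 ≤ n) :
    ∃ l : List ℤ, (∀ d ∈ l, ℓ ≤ d ∧ d ≤ u) ∧ digitValue l = n ∧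
      hammingWeight l = minWeight ℓ u n := by
  obtain ⟨l, hl, hval⟩ := exists_digitValue_eq hℓ hu hn
  have hne : ∃ k : ℕ, ∃ l : List ℤ,
      (∀ d ∈ l, ℓ ≤ d ∧ d ≤ u) ∧ digitValue l = n ∧ hammingWeight l = k :=
    ⟨_, l, hl, hval, rfl⟩
  exact Nat.sInf_mem hne

lemma minWeight_zero : minWeight ℓ u 0 = 0 :=
  Nat.eq_zero_of_le_zero (minWeight_digitValue_le (l := []) (by simp))

lemma minWeight_digit_add_le (hℓ : ℓ ≤ 0) (hu : 1 ≤ u) {a m : ℤ} (ha : ℓ ≤ a ∧ a ≤ u)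
    (hm : ℓ = 0 → 0 ≤ m) :
    minWeight ℓ u (a + m) ≤ 1 + minWeight ℓ u m := by
  obtain ⟨t, ht, rfl, hwt⟩ := exists_hammingWeight_eq_minWeight hℓ hu hm
  obtain ⟨l, hl, hval, hwl⟩ := exists_digitValue_eq_digit_add hℓ hu ht ha
  rw [← hval, ← hwt]
  refine (minWeight_digitValue_le hl).trans (hwl.trans ?_)
  rw [hammingWeight_cons]
  split_ifs <;> omega

lemma minWeight_two_mul_le (hℓ : ℓ ≤ 0) (hu : 1 ≤ u) {n : ℤ} (hn : ℓ = 0 → 0 ≤ n) :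
    minWeight ℓ u (2 * n) ≤ minWeight ℓ u n := by
  obtain ⟨l, hl, rfl, hwl⟩ := exists_hammingWeight_eq_minWeight hℓ hu hn
  have h0l : ∀ d ∈ 0 :: l, ℓ ≤ d ∧ d ≤ u := List.forall_mem_cons.2 ⟨⟨hℓ, by omega⟩, hl⟩
  simpa [hwl] using minWeight_digitValue_le h0l

lemma minWeight_le_two_mul (hℓ : ℓ ≤ 0) (hu : 1 ≤ u) {n : ℤ} (hn : ℓ = 0 → 0 ≤ n) :
    minWeight ℓ u n ≤ minWeight ℓ u (2 * n) := by
  obtain ⟨l, hl, hval, hwl⟩ :=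
    exists_hammingWeight_eq_minWeight hℓ hu (n := 2 * n) fun h0 => by have := hn h0; omega
  rcases l with _ | ⟨d, t⟩
  · obtain rfl : n = 0 := by simp at hval; omega
    rfl
  simp only [List.forall_mem_cons, digitValue_cons] at hl hval
  -- The last digit `d` of `2 * n` is even, and `d / 2` is a digit with the same weight.
  obtain ⟨l', hl', hval', hwl'⟩ :=
    exists_digitValue_eq_digit_add hℓ hu hl.2 (e := d / 2) ⟨by omega, by omega⟩
  rw [← hwl]
  have hn' : digitValue l' = n := by omega
  refine hn' ▸ (minWeight_digitValue_le hl').trans (hwl'.trans ?_)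
  simp only [hammingWeight_cons]
  split_ifs <;> omega

lemma minWeight_two_mul (hℓ : ℓ ≤ 0) (hu : 1 ≤ u) {n : ℤ} (hn : ℓ = 0 → 0 ≤ n) :
    minWeight ℓ u (2 * n) = minWeight ℓ u n :=
  (minWeight_two_mul_le hℓ hu hn).antisymm (minWeight_le_two_mul hℓ hu hn)

lemma minWeight_two_pow_mul (hℓ : ℓ ≤ 0) (hu : 1 ≤ u) {n : ℤ} (hn : ℓ = 0 → 0 ≤ n) (k : ℕ) :
    minWeight ℓ u (2 ^ k * n) = minWeight ℓ u n := by
  induction k with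
  | zero => simp
  | succ k ih =>
    rw [pow_succ', mul_assoc, minWeight_two_mul hℓ hu fun h0 => by have := hn h0; positivity, ih]

end MinWeight

theorem minimalWeight_recursion_general (w : ℕ) (ℓ u : ℤ)
    (hℓ : ℓ ≤ 0) (hu : 1 ≤ u)
    (h : ℤ → ℕ)
    (hdef : ∀ n : ℤ, h n = sInf {k : ℕ | ∃ l : List ℤ,
      (∀ d ∈ l, ℓ ≤ d ∧ d ≤ u) ∧ digitValue l = n ∧ hammingWeight l = k}) :
    h 0 = 0 ∧
    (∀ n : ℤ, n ≠ 0 → (ℓ = 0 → 0 ≤ n) → h (2 * n) = h n) ∧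
    (∀ n : ℤ, Odd n → (ℓ = 0 → 0 ≤ n) →
      ∀ a : ℤ, ℓ ≤ a → a ≤ u → a ≡ n [ZMOD ((2 : ℤ) ^ (w - 1))] →
        h n ≤ 1 + h ((n - a) / 2 ^ (w - 1))) := by
  obtain rfl : h = minWeight ℓ u := funext hdef
  refine ⟨minWeight_zero, fun n _ hn => minWeight_two_mul hℓ hu hn, ?_⟩
  intro n _ hn a haℓ hau hmod
  obtain ⟨m, hm⟩ := hmod.dvd
  obtain rfl : n = a + 2 ^ (w - 1) * m := by omega
  rw [add_sub_cancel_left, Int.mul_ediv_cancel_left _ (by positivity)]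
  by_cases hmℓ : ℓ = 0 → 0 ≤ m
  · calc minWeight ℓ u (a + 2 ^ (w - 1) * m)
        ≤ 1 + minWeight ℓ u (2 ^ (w - 1) * m) :=
          minWeight_digit_add_le hℓ hu ⟨haℓ, hau⟩ fun h0 => by have := hmℓ h0; positivity
      _ = 1 + minWeight ℓ u m := by rw [minWeight_two_pow_mul hℓ hu hmℓ]
  · -- Then `ℓ = 0` and `m < 0`, so `h m = 0` but `n` is itself a digit.
    push Not at hmℓ
    have hpos : (0 : ℤ) < 2 ^ (w - 1) := by positivity
    have hnu : a + 2 ^ (w - 1) * m ≤ u := by nlinarith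
    have := minWeight_digit_add_le hℓ hu ⟨hℓ.trans (hn hmℓ.1), hnu⟩ (m := 0) fun _ => le_rfl
    rw [add_zero, minWeight_zero] at this
    omega

/-- Recursive properties of the minimal Hamming weight `h` over all
representations with digit set `D_{ℓ,u} = {a : ℓ ≤ a ≤ u}`. -/
theorem minimalWeight_recursion (w : ℕ) (ℓ u : ℤ) (hw : 2 ≤ w)
    (hℓ : ℓ ≤ 0) (hu : 1 ≤ u)
    (hlow : (2 : ℤ) ^ (w - 1) ≤ u - ℓ + 1) (hhigh : u - ℓ + 1 < 2 ^ w)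
    (h : ℤ → ℕ)
    (hdef : ∀ n : ℤ, h n = sInf {k : ℕ | ∃ l : List ℤ,
      (∀ d ∈ l, ℓ ≤ d ∧ d ≤ u) ∧ digitValue l = n ∧ hammingWeight l = k}) :
    h 0 = 0 ∧
    (∀ n : ℤ, n ≠ 0 → (ℓ = 0 → 0 ≤ n) → h (2 * n) = h n) ∧
    (∀ n : ℤ, Odd n → (ℓ = 0 → 0 ≤ n) →
      ∀ a : ℤ, ℓ ≤ a → a ≤ u → a ≡ n [ZMOD ((2 : ℤ) ^ (w - 1))] →
        h n ≤ 1 + h ((n - a) / 2 ^ (w - 1))) :=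
  minimalWeight_recursion_general w ℓ u hℓ hu h hdef
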